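/- arXiv:0901.4698 — 5 statements merged into one kernel-verified Lean document; each statement's English description precedes it below -/
import Mathlib

section
/- For all natural numbers n and k, the q-Stirling numbers of the second kind satisfy (q-1)^(n-k) * S[n,k] = sum over i of (-1)^(n-i) * C(n,i) * qbinom(i,k), where C(n,i) is the ordinary binomial coefficient and qbinom(i,k) is the Gaussian binomial coefficient. -/
open Finset Matrix

/-- The q-integer `[n] = 1 + q + ... + q^(n-1)`. -/
def qint {R : Type*} [CommRing R] (q : R) (n : ℕ) : R := ∑ i ∈ Finset.range n, q ^ i

/-- The q-factorial `[n]! = [1][2]⋯[n]`. -/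
def qfact {R : Type*} [CommRing R] (q : R) (n : ℕ) : R := ∏ i ∈ Finset.range n, qint q (i + 1)

/-- The Gaussian binomial coefficient, via the q-Pascal recurrence. -/
def qbinom {R : Type*} [CommRing R] (q : R) : ℕ → ℕ → R
  | 0, 0 => 1
  | 0, _ + 1 => 0
  | _ + 1, 0 => 1
  | n + 1, k + 1 => qbinom q n k + q ^ (k + 1) * qbinom q n (k + 1)

/-- The q-Stirling numbers of the second kind:
`S[n,k] = S[n-1,k-1] + [k]·S[n-1,k]`, `S[0,k] = δ_{k0}`, `S[n,0] = δ_{n0}`. -/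
def qStirling2 {R : Type*} [CommRing R] (q : R) : ℕ → ℕ → R
  | 0, 0 => 1
  | 0, _ + 1 => 0
  | _ + 1, 0 => 0
  | n + 1, k + 1 => qStirling2 q n k + qint q (k + 1) * qStirling2 q n (k + 1)

/-- The q-Pochhammer symbol `(a;q)_m = ∏_{j<m} (1 - q^j a)`. -/
def qpoch {R : Type*} [CommRing R] (q a : R) (m : ℕ) : R := ∏ j ∈ Finset.range m, (1 - q ^ j * a)

section Aux

variable {R : Type*} [CommRing R]

lemma qbinom_right_zero (q : R) (n : ℕ) : qbinom q n 0 = 1 := by cases n <;> rfl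

lemma qStirling2_eq_zero (q : R) : ∀ n k : ℕ, n < k → qStirling2 q n k = 0
  | 0, _ + 1, _ => rfl
  | n + 1, k + 1, h => by
    rw [qStirling2, qStirling2_eq_zero q n k (by omega),
      qStirling2_eq_zero q n (k + 1) (by omega), mul_zero, add_zero]

/-- The unsigned alternating sum. -/
def Tsum' (q : R) (n k : ℕ) : R :=
  ∑ i ∈ Finset.range (n + 1), (-1 : R) ^ i * (n.choose i : R) * qbinom q i k

lemma neg_one_pow_sub {i n : ℕ} (h : i ≤ n) : ((-1 : R)) ^ (n - i) = (-1) ^ n * (-1) ^ i := by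
  rw [← pow_add]
  have hni : n + i = (n - i) + 2 * i := by omega
  rw [hni, pow_add, pow_mul]
  norm_num

lemma Tsum_eq (q : R) (n k : ℕ) :
    (∑ i ∈ Finset.range (n + 1), (-1 : R) ^ (n - i) * (n.choose i : R) * qbinom q i k)
      = (-1) ^ n * Tsum' q n k := by
  rw [Tsum', Finset.mul_sum]
  refine Finset.sum_congr rfl fun i hi => ?_
  rw [neg_one_pow_sub (Nat.lt_succ_iff.mp (Finset.mem_range.mp hi))]
  ring

lemma Tsum'_succ_zero (q : R) (n : ℕ) : Tsum' q (n + 1) 0 = 0 := by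
  have h : (∑ m ∈ Finset.range (n + 1 + 1), ((-1) ^ m * (n + 1).choose m : ℤ)) = 0 :=
    Int.alternating_sum_range_choose_of_ne (Nat.succ_ne_zero n)
  have h2 := congrArg (fun z : ℤ => (z : R)) h
  push_cast at h2
  rw [Tsum']
  simpa [qbinom_right_zero] using h2

lemma Tsum'_succ_succ (q : R) (n k : ℕ) :
    Tsum' q (n + 1) (k + 1) = -(Tsum' q n k + (q ^ (k + 1) - 1) * Tsum' q n (k + 1)) := by
  have hC : Tsum' q n (k + 1)
      = ∑ i ∈ Finset.range (n + 1),
          (-1 : R) ^ (i + 1) * (n.choose (i + 1) : R) * qbinom q (i + 1) (k + 1) := by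
    have h1 := Finset.sum_range_succ'
      (fun j => (-1 : R) ^ j * (n.choose j : R) * qbinom q j (k + 1)) (n + 1)
    have h2 := Finset.sum_range_succ
      (fun j => (-1 : R) ^ j * (n.choose j : R) * qbinom q j (k + 1)) (n + 1)
    rw [h2] at h1
    simp only [Nat.choose_succ_self, Nat.cast_zero, mul_zero, zero_mul, add_zero,
      Nat.choose_zero_right, Nat.cast_one, pow_zero, one_mul,
      show qbinom q 0 (k + 1) = 0 from rfl] at h1
    rw [Tsum', h1]
  have key : ∀ i ∈ Finset.range (n + 1),
      (-1 : R) ^ (i + 1) * (((n + 1).choose (i + 1) : ℕ) : R) * qbinom q (i + 1) (k + 1)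
        = (-((-1 : R) ^ i * (n.choose i : R) * qbinom q i k)
            - q ^ (k + 1) * ((-1 : R) ^ i * (n.choose i : R) * qbinom q i (k + 1)))
          + (-1 : R) ^ (i + 1) * (n.choose (i + 1) : R) * qbinom q (i + 1) (k + 1) := by
    intro i _
    rw [Nat.choose_succ_succ]
    push_cast
    rw [show qbinom q (i + 1) (k + 1) = qbinom q i k + q ^ (k + 1) * qbinom q i (k + 1) from rfl]
    ring
  have h0 : Tsum' q (n + 1) (k + 1)
      = ∑ i ∈ Finset.range (n + 1),
          (-1 : R) ^ (i + 1) * (((n + 1).choose (i + 1) : ℕ) : R) * qbinom q (i + 1) (k + 1) := by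
    rw [Tsum', Finset.sum_range_succ']
    simp [show qbinom q 0 (k + 1) = 0 from rfl]
  rw [h0, Finset.sum_congr rfl key, Finset.sum_add_distrib, Finset.sum_sub_distrib,
    ← hC, ← Finset.mul_sum]
  rw [show (∑ i ∈ Finset.range (n + 1), -((-1 : R) ^ i * (n.choose i : R) * qbinom q i k))
      = -Tsum' q n k by rw [Finset.sum_neg_distrib, Tsum']]
  rw [show (∑ i ∈ Finset.range (n + 1), (-1 : R) ^ i * (n.choose i : R) * qbinom q i (k + 1))
      = Tsum' q n (k + 1) from rfl]
  ring

lemma sum_rec (q : R) (n k : ℕ) :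
    (∑ i ∈ Finset.range (n + 1 + 1),
        (-1 : R) ^ (n + 1 - i) * ((n + 1).choose i : R) * qbinom q i (k + 1))
      = (∑ i ∈ Finset.range (n + 1), (-1 : R) ^ (n - i) * (n.choose i : R) * qbinom q i k)
        + (q ^ (k + 1) - 1) *
          (∑ i ∈ Finset.range (n + 1), (-1 : R) ^ (n - i) * (n.choose i : R) * qbinom q i (k + 1)) := by
  rw [Tsum_eq, Tsum_eq, Tsum_eq, Tsum'_succ_succ, pow_succ]
  ring

lemma sum_zero_case (q : R) (n : ℕ) :
    (∑ i ∈ Finset.range (n + 1 + 1),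
        (-1 : R) ^ (n + 1 - i) * ((n + 1).choose i : R) * qbinom q i 0) = 0 := by
  rw [Tsum_eq, Tsum'_succ_zero, mul_zero]

end Aux

/-- `(q-1)^(n-k) S[n,k] = ∑_i (-1)^(n-i) C(n,i) qbinom(i,k)`. -/
theorem qStirling2_qbinom_identity {F : Type*} [Field F] (q : F) (hq : q ≠ 1) (n k : ℕ) :
    (q - 1) ^ (n - k) * qStirling2 q n k =
      ∑ i ∈ Finset.range (n + 1), (-1 : F) ^ (n - i) * (n.choose i : F) * qbinom q i k := by
  induction n generalizing k with
  | zero =>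
    cases k with
    | zero => simp [qStirling2, qbinom]
    | succ k => simp [show qStirling2 q 0 (k + 1) = 0 from rfl,
        show qbinom q 0 (k + 1) = 0 from rfl]
  | succ n ih =>
    cases k with
    | zero =>
      rw [sum_zero_case, show qStirling2 q (n + 1) 0 = 0 from rfl, mul_zero]
    | succ k =>
      rw [sum_rec, ← ih k, ← ih (k + 1), Nat.succ_sub_succ,
        show qStirling2 q (n + 1) (k + 1)
          = qStirling2 q n k + qint q (k + 1) * qStirling2 q n (k + 1) from rfl]
      rcases le_or_gt (k + 1) n with h | h
      · have h1 : n - k = (n - (k + 1)) + 1 := by omega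
        have h2 : (q - 1) * qint q (k + 1) = q ^ (k + 1) - 1 := by
          rw [qint, mul_comm]; exact geom_sum_mul q (k + 1)
        rw [h1, pow_succ, ← h2]
        ring
      · have hz : qStirling2 q n (k + 1) = 0 := qStirling2_eq_zero q n (k + 1) h
        rw [hz]
        ring
end

section
/- For sequences s(n), t(n) in a commutative ring, define a(n,k) by a(0,k) = (1 if k=0 else 0), a(n,0) = s(0)·a(n-1,0) + t(0)·a(n-1,1), and a(n,k) = a(n-1,k-1) + s(k)·a(n-1,k) + t(k)·a(n-1,k+1) for k ≥ 1. Then the Hankel determinant det(a(i+j,0))_{i,j=0}^{n-1} equals the product over i from 1 to n-1 of the product over k from 0 to i-1 of t(k). -/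
open Finset Matrix

section Aux

variable {R : Type*} [CommRing R] (s t : ℕ → R) (a : ℕ → ℕ → R)

lemma hankel_vanish (h0 : ∀ k, a 0 k = if k = 0 then 1 else 0)
    (h2 : ∀ n k, a (n + 1) (k + 1) = a n k + s (k + 1) * a n (k + 1) + t (k + 1) * a n (k + 2)) :
    ∀ n k, n < k → a n k = 0 := by
  intro n
  induction n with
  | zero =>
    intro k hk
    rw [h0, if_neg (by omega)]
  | succ n ih =>
    intro k hk
    match k with
    | k + 1 =>
      rw [h2, ih k (by omega), ih (k+1) (by omega), ih (k+2) (by omega)]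
      ring

lemma hankel_diag (h0 : ∀ k, a 0 k = if k = 0 then 1 else 0)
    (h2 : ∀ n k, a (n + 1) (k + 1) = a n k + s (k + 1) * a n (k + 1) + t (k + 1) * a n (k + 2)) :
    ∀ n, a n n = 1 := by
  intro n
  induction n with
  | zero => simp [h0]
  | succ n ih =>
    rw [h2, ih, hankel_vanish s t a h0 h2 n (n+1) (by omega),
      hankel_vanish s t a h0 h2 n (n+2) (by omega)]
    ring

lemma hankel_key (h0 : ∀ k, a 0 k = if k = 0 then 1 else 0)
    (h1 : ∀ n, a (n + 1) 0 = s 0 * a n 0 + t 0 * a n 1)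
    (h2 : ∀ n k, a (n + 1) (k + 1) = a n k + s (k + 1) * a n (k + 1) + t (k + 1) * a n (k + 2)) :
    ∀ i j, a (i + j) 0 =
      ∑ k ∈ Finset.range (i + 1), (∏ l ∈ Finset.range k, t l) * a i k * a j k := by
  set c : ℕ → R := fun k => ∏ l ∈ Finset.range k, t l with hc
  have hcs : ∀ k, c (k + 1) = c k * t k := by
    intro k; simp [hc, Finset.prod_range_succ]
  have hvan := hankel_vanish s t a h0 h2
  intro i
  induction i with
  | zero =>
    intro j
    simp [h0, hc]
  | succ i ih =>
    intro j
    have hidx : i + 1 + j = i + (j + 1) := by omega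
    rw [hidx, ih (j + 1)]
    -- now prove the sum identity
    set P : ℕ → R := fun N => ∑ k ∈ Finset.range N, c k * s k * a i k * a j k with hP
    set Q : ℕ → R := fun N => ∑ k ∈ Finset.range N, c k * t k * a i k * a j (k+1) with hQ
    set Rr : ℕ → R := fun N => ∑ k ∈ Finset.range N, c k * t k * a i (k+1) * a j k with hRr
    have claim1 : ∑ k ∈ Finset.range (i + 1), c k * a i k * a (j + 1) k
        = P (i+1) + Q (i+1) + Rr i := by
      rw [Finset.sum_range_succ']
      have e1 : ∀ k ∈ Finset.range i, c (k+1) * a i (k+1) * a (j+1) (k+1)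
          = c k * t k * a i (k+1) * a j k
            + (c (k+1) * s (k+1) * a i (k+1) * a j (k+1)
              + c (k+1) * t (k+1) * a i (k+1) * a j (k+2)) := by
        intro k _
        rw [h2, hcs]
        ring
      rw [Finset.sum_congr rfl e1, Finset.sum_add_distrib, Finset.sum_add_distrib]
      rw [h1]
      have eP : P (i+1) = (∑ k ∈ Finset.range i, c (k+1) * s (k+1) * a i (k+1) * a j (k+1))
          + c 0 * s 0 * a i 0 * a j 0 := Finset.sum_range_succ' _ _
      have eQ : Q (i+1) = (∑ k ∈ Finset.range i, c (k+1) * t (k+1) * a i (k+1) * a j (k+2))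
          + c 0 * t 0 * a i 0 * a j 1 := Finset.sum_range_succ' _ _
      rw [eP, eQ, hRr]
      ring
    have claim2 : ∑ k ∈ Finset.range (i + 2), c k * a (i+1) k * a j k
        = P (i+2) + Q (i+1) + Rr (i+2) := by
      rw [Finset.sum_range_succ']
      have e1 : ∀ k ∈ Finset.range (i+1), c (k+1) * a (i+1) (k+1) * a j (k+1)
          = c k * t k * a i k * a j (k+1)
            + (c (k+1) * s (k+1) * a i (k+1) * a j (k+1)
              + c (k+1) * t (k+1) * a i (k+2) * a j (k+1)) := by
        intro k _
        rw [h2, hcs]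
        ring
      rw [Finset.sum_congr rfl e1, Finset.sum_add_distrib, Finset.sum_add_distrib]
      rw [h1]
      have eP : P (i+2) = (∑ k ∈ Finset.range (i+1), c (k+1) * s (k+1) * a i (k+1) * a j (k+1))
          + c 0 * s 0 * a i 0 * a j 0 := Finset.sum_range_succ' _ _
      have eR : Rr (i+2) = (∑ k ∈ Finset.range (i+1), c (k+1) * t (k+1) * a i (k+2) * a j (k+1))
          + c 0 * t 0 * a i 1 * a j 0 := Finset.sum_range_succ' _ _
      rw [eP, eR, hQ]
      ring
    rw [claim1, claim2]
    have eP2 : P (i+2) = P (i+1) := by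
      show (∑ k ∈ Finset.range (i+2), c k * s k * a i k * a j k)
          = ∑ k ∈ Finset.range (i+1), c k * s k * a i k * a j k
      rw [Finset.sum_range_succ, hvan i (i+1) (by omega)]
      ring
    have eR2 : Rr (i+2) = Rr i := by
      show (∑ k ∈ Finset.range (i+2), c k * t k * a i (k+1) * a j k)
          = ∑ k ∈ Finset.range i, c k * t k * a i (k+1) * a j k
      rw [Finset.sum_range_succ, Finset.sum_range_succ,
        hvan i (i+1) (by omega), hvan i (i+2) (by omega)]
      ring
    rw [eP2, eR2]

end Aux

/-- Hankel determinants of the moments of a Jacobi-type recurrence. -/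
theorem hankel_det_of_recurrence {R : Type*} [CommRing R] (s t : ℕ → R) (a : ℕ → ℕ → R)
    (h0 : ∀ k, a 0 k = if k = 0 then 1 else 0)
    (h1 : ∀ n, a (n + 1) 0 = s 0 * a n 0 + t 0 * a n 1)
    (h2 : ∀ n k, a (n + 1) (k + 1) = a n k + s (k + 1) * a n (k + 1) + t (k + 1) * a n (k + 2))
    (n : ℕ) :
    (Matrix.of fun i j : Fin n => a ((i : ℕ) + (j : ℕ)) 0).det =
      ∏ i ∈ Finset.Ico 1 n, ∏ k ∈ Finset.range i, t k := by
  set c : ℕ → R := fun k => ∏ l ∈ Finset.range k, t l with hc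
  have hvan := hankel_vanish s t a h0 h2
  have hdiag := hankel_diag s t a h0 h2
  set L : Matrix (Fin n) (Fin n) R := Matrix.of fun i k : Fin n => a i k with hL
  set D : Matrix (Fin n) (Fin n) R := Matrix.diagonal (fun k : Fin n => c k) with hD
  have hfact : (Matrix.of fun i j : Fin n => a ((i : ℕ) + (j : ℕ)) 0) = L * D * Lᵀ := by
    ext i j
    rw [Matrix.mul_apply]
    simp only [Matrix.mul_diagonal, Matrix.transpose_apply, Matrix.of_apply, hL, hD]
    rw [hankel_key s t a h0 h1 h2 i j]
    rw [Fin.sum_univ_eq_sum_range (fun k => a i k * c k * a j k) n]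
    rw [Finset.sum_subset (Finset.range_subset_range.mpr (by omega : (i:ℕ) + 1 ≤ n))]
    · exact Finset.sum_congr rfl fun k _ => by ring
    · intro k _ hk
      rw [hvan i k (by simp at hk ⊢; omega)]
      ring
  rw [hfact, Matrix.det_mul, Matrix.det_mul]
  have hLtri : L.BlockTriangular OrderDual.toDual := by
    intro i j hij
    exact hvan i j (by simpa using (hij : (i : Fin n) < j))
  have hdetL : L.det = 1 := by
    rw [Matrix.det_of_lowerTriangular L hLtri]
    simp [hL, hdiag]
  rw [hdetL, Matrix.det_transpose, hdetL, Matrix.det_diagonal]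
  rw [one_mul, mul_one]
  rw [Fin.prod_univ_eq_prod_range (fun k => c k) n]
  refine (Finset.prod_subset (fun x hx => ?_) (fun x hx hx' => ?_)).symm
  · simp only [Finset.mem_Ico, Finset.mem_range] at hx ⊢; omega
  · have : x = 0 := by simp only [Finset.mem_Ico, Finset.mem_range] at hx hx'; omega
    simp [this, hc]
end

section
/- Let (a_n) be a sequence in a commutative ring and define its binomial transform b_n = sum over k from 0 to n of C(n,k)·a_k. Then for every n, the Hankel determinants agree: det(a_{i+j})_{i,j=0}^{n-1} = det(b_{i+j})_{i,j=0}^{n-1}. -/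
open Finset Matrix

/-!
With `E` the shift of sequences, `b_m = ((1 + E) ^ m a) 0`, so splitting `(1 + E) ^ (i + j)`
as `(1 + E) ^ i (1 + E) ^ j` gives `b_(i+j) = ∑_(p,q) C(i,p) C(j,q) a_(p+q)`. Thus the Hankel
matrix of `b` is `P H Pᵀ`, where `H` is that of `a` and `P = (C(i,k))` is unitriangular.
-/

section BinomialTransform

open fwdDiff_aux

variable {R : Type*}

def binomialTransform [Semiring R] (a : ℕ → R) (n : ℕ) : R :=
  ∑ k ∈ range (n + 1), (n.choose k : R) * a k

def hankelMatrix (a : ℕ → R) (n : ℕ) : Matrix (Fin n) (Fin n) R :=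
  of fun i j => a (i + j)

def pascalMatrix (R : Type*) [Semiring R] (n : ℕ) : Matrix (Fin n) (Fin n) R :=
  of fun i k => ((i : ℕ).choose k : R)

theorem det_pascalMatrix [CommRing R] (n : ℕ) : (pascalMatrix R n).det = 1 := by
  rw [det_of_isLowerTriangular _ fun i j (hij : i < j) => by
    simp [pascalMatrix, Nat.choose_eq_zero_of_lt (Fin.lt_def.mp hij)]]
  simp [pascalMatrix]

theorem shift_add_one_pow_apply [Ring R] (a : ℕ → R) (n p : ℕ) :
    ((shiftₗ ℕ R 1 + 1) ^ n) a p = ∑ k ∈ range (n + 1), (n.choose k : R) * a (p + k) := by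
  rw [(Commute.one_right (shiftₗ ℕ R 1)).add_pow n, LinearMap.sum_apply, Finset.sum_apply]
  refine sum_congr rfl fun k _ => ?_
  rw [one_pow, mul_one, Module.End.mul_apply, Module.End.natCast_apply, map_nsmul,
    Pi.smul_apply, shiftₗ_pow_apply, smul_eq_mul, mul_one, nsmul_eq_mul]

theorem binomialTransform_add [Ring R] (a : ℕ → R) (i j : ℕ) :
    binomialTransform a (i + j) =
      ∑ p ∈ range (i + 1),
        (i.choose p : R) * ∑ q ∈ range (j + 1), (j.choose q : R) * a (p + q) := by
  calc binomialTransform a (i + j) = ((shiftₗ ℕ R 1 + 1) ^ (i + j)) a 0 := by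
        simp only [binomialTransform, shift_add_one_pow_apply, zero_add]
    _ = _ := by simp only [pow_add, Module.End.mul_apply, shift_add_one_pow_apply, zero_add]

theorem sum_fin_choose_mul_eq_sum_range [Semiring R] {i n : ℕ} (hi : i < n) (f : ℕ → R) :
    ∑ k : Fin n, (i.choose k : R) * f k = ∑ k ∈ range (i + 1), (i.choose k : R) * f k := by
  rw [Fin.sum_univ_eq_sum_range (fun k => (i.choose k : R) * f k)]
  refine (sum_subset (range_subset_range.mpr hi) fun k _ hk => ?_).symm
  rw [Nat.choose_eq_zero_of_lt (by simpa using hk), Nat.cast_zero, zero_mul]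

theorem hankelMatrix_binomialTransform [CommRing R] (a : ℕ → R) (n : ℕ) :
    hankelMatrix (binomialTransform a) n =
      pascalMatrix R n * hankelMatrix a n * (pascalMatrix R n)ᵀ := by
  rw [Matrix.mul_assoc]
  ext i j
  simp only [mul_apply, transpose_apply, hankelMatrix, pascalMatrix, of_apply]
  rw [binomialTransform_add, ← sum_fin_choose_mul_eq_sum_range i.isLt]
  refine sum_congr rfl fun p _ => ?_
  simp only [mul_comm (a _), sum_fin_choose_mul_eq_sum_range j.isLt (fun q => a (p + q))]

end BinomialTransform

/-- The binomial transform preserves Hankel determinants. -/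
theorem hankel_det_binomial_transform {R : Type*} [CommRing R] (a b : ℕ → R)
    (hb : ∀ n, b n = ∑ k ∈ Finset.range (n + 1), (n.choose k : R) * a k) (n : ℕ) :
    (Matrix.of fun i j : Fin n => a ((i : ℕ) + (j : ℕ))).det =
      (Matrix.of fun i j : Fin n => b ((i : ℕ) + (j : ℕ))).det := by
  obtain rfl : b = binomialTransform a := funext hb
  change (hankelMatrix a n).det = (hankelMatrix (binomialTransform a) n).det
  rw [hankelMatrix_binomialTransform, det_mul, det_mul, det_transpose, det_pascalMatrix,
    one_mul, mul_one]
end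

section
/- The Rogers-Szegő polynomials r_n(x) = sum_{k=0}^n qbinom(n,k)·x^k satisfy the recurrence r_n(x) = (x+1)·r_{n-1}(x) + (q^{n-1}-1)·x·r_{n-2}(x) for n ≥ 2. -/
open Finset Matrix

section
variable {R : Type*} [CommRing R] (q x : R)

lemma qbinom_succ_succ (n k : ℕ) :
    qbinom q (n+1) (k+1) = qbinom q n k + q ^ (k+1) * qbinom q n (k+1) := rfl

lemma qbinom_zero (n : ℕ) : qbinom q n 0 = 1 := by cases n <;> rfl

lemma qbinom_eq_zero : ∀ n k : ℕ, n < k → qbinom q n k = 0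
  | 0, _+1, _ => rfl
  | n+1, k+1, h => by
    rw [qbinom_succ_succ, qbinom_eq_zero n k (by omega),
      qbinom_eq_zero n (k+1) (by omega)]; ring

lemma qbinom_key : ∀ m k : ℕ,
    (q ^ (k+1) - 1) * qbinom q (m+1) (k+1) = (q ^ (m+1) - 1) * qbinom q m k := by
  intro m
  induction m with
  | zero =>
    intro k
    cases k with
    | zero => simp [qbinom]
    | succ k => simp [qbinom_succ_succ, show qbinom q 0 (k+1) = 0 from rfl,
        show qbinom q 0 (k+2) = 0 from rfl]
  | succ m ih =>
    intro k
    cases k with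
    | zero =>
      have h := ih 0
      rw [qbinom_succ_succ, qbinom_zero]
      rw [qbinom_zero] at h
      linear_combination q * h
    | succ k =>
      have h1 := ih k
      have h2 := ih (k+1)
      have hA := qbinom_succ_succ q m k
      rw [qbinom_succ_succ q (m+1) (k+1), qbinom_succ_succ q m k]
      linear_combination q * h1 + q^(k+2) * h2 + (q - q^(k+2)) * hA

end

/-- Rogers–Szegő recurrence `r_n = (x+1) r_(n-1) + (q^(n-1) - 1) x r_(n-2)` for `n ≥ 2`. -/
theorem rogersSzego_recurrence {R : Type*} [CommRing R] (q x : R) (n : ℕ) (hn : 2 ≤ n) :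
    ∑ k ∈ Finset.range (n + 1), qbinom q n k * x ^ k =
      (x + 1) * (∑ k ∈ Finset.range n, qbinom q (n - 1) k * x ^ k) +
        (q ^ (n - 1) - 1) * x * (∑ k ∈ Finset.range (n - 1), qbinom q (n - 2) k * x ^ k) := by
  obtain ⟨m, rfl⟩ : ∃ m, n = m + 2 := ⟨n - 2, by omega⟩
  have e1 : m + 2 - 1 = m + 1 := rfl
  have e2 : m + 2 - 2 = m := rfl
  rw [e1, e2]
  -- peel off the k = 0 term of the LHS
  have h0 := Finset.sum_range_succ' (fun k => qbinom q (m+2) k * x ^ k) (m+2)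
  simp only [qbinom_zero, pow_zero, mul_one] at h0
  rw [h0]
  -- rewrite each summand using the Pascal rule and the key identity
  have hsplit : ∀ i ∈ Finset.range (m+2),
      qbinom q (m+2) (i+1) * x^(i+1) =
        qbinom q (m+1) i * x^i * x
        + (qbinom q (m+1) (i+1) * x^(i+1) + (q^(m+1)-1) * (qbinom q m i * x^i * x)) := by
    intro i _
    have hk := qbinom_key q m i
    rw [qbinom_succ_succ]
    linear_combination (x^(i+1)) * hk
  rw [Finset.sum_congr rfl hsplit, Finset.sum_add_distrib, Finset.sum_add_distrib]
  -- the first piece is x * S1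
  have hA : ∑ i ∈ Finset.range (m+2), qbinom q (m+1) i * x^i * x
      = (∑ k ∈ Finset.range (m+2), qbinom q (m+1) k * x^k) * x := by
    rw [Finset.sum_mul]
  -- the second piece is S1 - 1
  have hB : ∑ i ∈ Finset.range (m+2), qbinom q (m+1) (i+1) * x^(i+1)
      = (∑ k ∈ Finset.range (m+2), qbinom q (m+1) k * x^k) - 1 := by
    have h := Finset.sum_range_succ' (fun k => qbinom q (m+1) k * x ^ k) (m+2)
    rw [Finset.sum_range_succ, qbinom_eq_zero q (m+1) (m+2) (by omega)] at h
    simp only [qbinom_zero, pow_zero, mul_one, zero_mul, add_zero] at h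
    linear_combination -h
  -- the third piece is (q^(m+1)-1) * x * S2
  have hC : ∑ i ∈ Finset.range (m+2), (q^(m+1)-1) * (qbinom q m i * x^i * x)
      = (q^(m+1)-1) * x * (∑ k ∈ Finset.range (m+1), qbinom q m k * x^k) := by
    rw [Finset.sum_range_succ, qbinom_eq_zero q m (m+1) (by omega)]
    simp only [zero_mul, mul_zero, add_zero]
    rw [Finset.mul_sum]
    exact Finset.sum_congr rfl fun i _ => by ring
  rw [hA, hB, hC]
  ring
end

section
/- The Hankel determinant of Rogers-Szegő polynomials satisfies det(r_{i+j}(x))_{i,j=0}^{n-1} = x^{C(n,2)} · q^{C(n,3)} · (q-1)^{C(n,2)} · product_{j=0}^{n-1} [j]!, where [j]! is the q-factorial. -/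
open Finset Matrix

namespace HankelRSAux

variable {R : Type*} [CommRing R] (q x : R)

/-- Rogers–Szegő polynomial. -/
def rs (n : ℕ) : R := ∑ k ∈ Finset.range (n + 1), qbinom q n k * x ^ k

/-- Diagonal entries of the LDLᵀ decomposition. -/
def dc (k : ℕ) : R := x ^ k * q ^ (k.choose 2) * (q - 1) ^ k * qfact q k

/-- Entries of the unitriangular factor. -/
def cc (m k : ℕ) : R := qbinom q m k * rs q x (m - k)

lemma qbinom_succ_succ (n k : ℕ) :
    qbinom q (n + 1) (k + 1) = qbinom q n k + q ^ (k + 1) * qbinom q n (k + 1) := rfl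

lemma qbinom_zero_right (n : ℕ) : qbinom q n 0 = 1 := by cases n <;> rfl

lemma qbinom_eq_zero : ∀ {n k : ℕ}, n < k → qbinom q n k = 0 := by
  intro n
  induction n with
  | zero =>
    intro k h
    obtain ⟨k, rfl⟩ := Nat.exists_eq_add_of_lt h
    rfl
  | succ n ih =>
    intro k h
    obtain ⟨j, rfl⟩ := Nat.exists_eq_add_of_lt h
    have e : n + 1 + j + 1 = (n + j + 1) + 1 := by omega
    rw [e, qbinom_succ_succ]
    have h1 : qbinom q n (n + j + 1) = 0 := ih (by omega)
    have h2 : qbinom q n (n + j + 1 + 1) = 0 := ih (by omega)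
    rw [h1, h2]
    ring

lemma qbinom_self : ∀ n : ℕ, qbinom q n n = (1 : R)
  | 0 => rfl
  | n + 1 => by
    rw [qbinom_succ_succ, qbinom_self n, qbinom_eq_zero q (Nat.lt_succ_self n)]
    ring

/-- Cross identity. -/
lemma cross : ∀ m k : ℕ,
    (q ^ (k + 1) - 1) * qbinom q m (k + 1) * q ^ k = (q ^ m - q ^ k) * qbinom q m k := by
  intro m
  induction m with
  | zero =>
    intro k
    cases k with
    | zero =>
      show (q ^ 1 - 1) * (0 : R) * q ^ 0 = (q ^ 0 - q ^ 0) * 1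
      ring
    | succ k =>
      show (q ^ (k + 1 + 1) - 1) * (0 : R) * q ^ (k + 1) = (q ^ 0 - q ^ (k + 1)) * 0
      ring
  | succ m ih =>
    intro k
    cases k with
    | zero =>
      have h1 := ih 0
      rw [qbinom_zero_right] at h1
      rw [qbinom_succ_succ, qbinom_zero_right q m, qbinom_zero_right q (m + 1)]
      norm_num at h1 ⊢
      linear_combination q * h1
    | succ k =>
      have h1 := ih k
      have h2 := ih (k + 1)
      rw [qbinom_succ_succ q m (k + 1), qbinom_succ_succ q m k]
      linear_combination q ^ (k + 2) * h2 + q * h1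

lemma vert (s k : ℕ) :
    (q ^ (k + 1) - 1) * qbinom q (s + 1) (k + 1) = (q ^ (s + 1) - 1) * qbinom q s k := by
  rw [qbinom_succ_succ]
  linear_combination q * cross q s k

lemma rs_zero : rs q x 0 = 1 := by simp [rs, qbinom_zero_right]

lemma rs_one : rs q x 1 = 1 + x := by
  have h0 : qbinom q 1 0 = (1 : R) := qbinom_zero_right q 1
  have h1 : qbinom q 1 1 = (1 : R) := qbinom_self q 1
  simp [rs, Finset.sum_range_succ, h0, h1]

/-- Rogers–Szegő three-term recurrence. -/
lemma rs_rec (s : ℕ) :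
    rs q x (s + 2) = (1 + x) * rs q x (s + 1) + x * (q ^ (s + 1) - 1) * rs q x s := by
  have e1 : rs q x (s + 2)
      = (∑ k ∈ Finset.range (s + 2), qbinom q (s + 2) (k + 1) * x ^ (k + 1)) + 1 := by
    rw [rs, Finset.sum_range_succ']
    simp [qbinom_zero_right]
  have e2 : rs q x (s + 1)
      = (∑ k ∈ Finset.range (s + 1), qbinom q (s + 1) (k + 1) * x ^ (k + 1)) + 1 := by
    rw [rs, Finset.sum_range_succ']
    simp [qbinom_zero_right]
  have e3 : x * (q ^ (s + 1) - 1) * rs q x s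
      = ∑ k ∈ Finset.range (s + 1),
          ((q ^ (k + 1) - 1) * qbinom q (s + 1) (k + 1)) * x ^ (k + 1) := by
    rw [rs, Finset.mul_sum]
    refine Finset.sum_congr rfl fun k _ => ?_
    rw [vert]
    ring
  rw [e1, e2, e3]
  have e4 : ∑ k ∈ Finset.range (s + 2), qbinom q (s + 2) (k + 1) * x ^ (k + 1)
      = ∑ k ∈ Finset.range (s + 2),
          (qbinom q (s + 1) k * x ^ (k + 1)
            + q ^ (k + 1) * qbinom q (s + 1) (k + 1) * x ^ (k + 1)) := by
    refine Finset.sum_congr rfl fun k _ => ?_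
    rw [qbinom_succ_succ]; ring
  rw [e4, Finset.sum_add_distrib]
  have e5 : ∑ k ∈ Finset.range (s + 2), q ^ (k + 1) * qbinom q (s + 1) (k + 1) * x ^ (k + 1)
      = ∑ k ∈ Finset.range (s + 1), q ^ (k + 1) * qbinom q (s + 1) (k + 1) * x ^ (k + 1) := by
    rw [Finset.sum_range_succ, qbinom_eq_zero q (Nat.lt_succ_self (s + 1))]
    ring
  have e7 : ∑ k ∈ Finset.range (s + 2), qbinom q (s + 1) k * x ^ (k + 1)
      = x + x * ∑ k ∈ Finset.range (s + 1), qbinom q (s + 1) (k + 1) * x ^ (k + 1) := by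
    rw [Finset.sum_range_succ', qbinom_zero_right, Finset.mul_sum]
    have hc : ∀ k ∈ Finset.range (s + 1),
        qbinom q (s + 1) (k + 1) * x ^ (k + 1 + 1)
          = x * (qbinom q (s + 1) (k + 1) * x ^ (k + 1)) := fun k _ => by ring
    rw [Finset.sum_congr rfl hc]
    ring
  have e8 : ∑ k ∈ Finset.range (s + 1), q ^ (k + 1) * qbinom q (s + 1) (k + 1) * x ^ (k + 1)
      = (∑ k ∈ Finset.range (s + 1), qbinom q (s + 1) (k + 1) * x ^ (k + 1))
        + ∑ k ∈ Finset.range (s + 1),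
            (q ^ (k + 1) - 1) * qbinom q (s + 1) (k + 1) * x ^ (k + 1) := by
    rw [← Finset.sum_add_distrib]
    refine Finset.sum_congr rfl fun k _ => ?_
    ring
  rw [e5, e7, e8]
  ring

lemma cc_self (n : ℕ) : cc q x n n = 1 := by
  simp [cc, qbinom_self, rs_zero]

lemma cc_eq_zero {m k : ℕ} (h : m < k) : cc q x m k = 0 := by
  simp [cc, qbinom_eq_zero q h]

lemma cc_rec_zero (m : ℕ) :
    cc q x (m + 1) 0 = (1 + x) * cc q x m 0 + x * (q - 1) * cc q x m 1 := by
  cases m with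
  | zero =>
    have h1 : qbinom q 0 1 = (0 : R) := qbinom_eq_zero q (by omega)
    simp [cc, qbinom_zero_right, h1, rs_zero, rs_one]
  | succ s =>
    show qbinom q (s + 2) 0 * rs q x (s + 2)
        = (1 + x) * (qbinom q (s + 1) 0 * rs q x (s + 1))
          + x * (q - 1) * (qbinom q (s + 1) 1 * rs q x (s + 1 - 1))
    have hs : s + 1 - 1 = s := by omega
    rw [hs, qbinom_zero_right, qbinom_zero_right, rs_rec]
    have hv := vert q s 0
    rw [qbinom_zero_right] at hv
    norm_num at hv
    linear_combination (-(x * rs q x s)) * hv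

lemma cc_rec_succ (m k : ℕ) :
    cc q x (m + 1) (k + 1) = cc q x m k + q ^ (k + 1) * (1 + x) * cc q x m (k + 1)
      + x * q ^ (k + 1) * (q ^ (k + 2) - 1) * cc q x m (k + 2) := by
  rcases lt_or_ge m (k + 1) with h | h
  · have hz1 : cc q x m (k + 1) = 0 := cc_eq_zero q x (by omega)
    have hz2 : cc q x m (k + 2) = 0 := cc_eq_zero q x (by omega)
    rcases Nat.lt_or_ge m k with hlt | hge
    · have hz0 : cc q x m k = 0 := cc_eq_zero q x hlt
      have hz3 : cc q x (m + 1) (k + 1) = 0 := cc_eq_zero q x (by omega)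
      rw [hz0, hz1, hz2, hz3]; ring
    · have hmk : m = k := by omega
      subst hmk
      rw [cc_self q x (m + 1), hz1, hz2, cc_self q x m]
      ring
  · rcases Nat.eq_or_lt_of_le h with hmk | hlt
    · -- m = k + 1
      have hmk : m = k + 1 := hmk.symm
      subst hmk
      have e1 : cc q x (k + 1 + 1) (k + 1) = qbinom q (k + 2) (k + 1) * (1 + x) := by
        rw [cc, (by omega : k + 1 + 1 - (k + 1) = 1), rs_one]
      have e4 : qbinom q (k + 2) (k + 1) = qbinom q (k + 1) k + q ^ (k + 1) * (1 : R) := by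
        rw [qbinom_succ_succ, qbinom_self]
      have e2 : cc q x (k + 1) (k + 1) = 1 := cc_self q x (k + 1)
      have e3 : cc q x (k + 1) (k + 2) = 0 := cc_eq_zero q x (by omega)
      have e5 : cc q x (k + 1) k = qbinom q (k + 1) k * (1 + x) := by
        rw [cc, (by omega : k + 1 - k = 1), rs_one]
      rw [e1, e2, e3, e4, e5]
      ring
    · -- m ≥ k + 2
      obtain ⟨s, rfl⟩ : ∃ s, m = k + 2 + s := ⟨m - (k + 2), by omega⟩
      simp only [cc]
      rw [(by omega : k + 2 + s + 1 - (k + 1) = s + 2),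
        (by omega : k + 2 + s - k = s + 2),
        (by omega : k + 2 + s - (k + 1) = s + 1),
        (by omega : k + 2 + s - (k + 2) = s)]
      rw [(by omega : k + 2 + s + 1 = (k + 2 + s) + 1), qbinom_succ_succ, rs_rec]
      have hc := cross q (k + 2 + s) (k + 1)
      have hq : q ^ (k + 2 + s) - q ^ (k + 1) = q ^ (k + 1) * (q ^ (s + 1) - 1) := by
        rw [mul_sub, mul_one, ← pow_add]
        congr 2
        omega
      rw [hq] at hc
      linear_combination (-(x * rs q x s)) * hc

lemma dc_zero : dc q x 0 = 1 := by simp [dc, qfact]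

lemma dc_one : dc q x 1 = x * (q - 1) := by
  simp [dc, qfact, qint]

lemma qfact_succ (k : ℕ) : qfact q (k + 1) = qfact q k * qint q (k + 1) :=
  Finset.prod_range_succ _ _

lemma dc_succ (k : ℕ) : dc q x (k + 1) = x * q ^ k * (q ^ (k + 1) - 1) * dc q x k := by
  have h2 : (k + 1).choose 2 = k.choose 2 + k := by
    rw [Nat.choose_succ_succ]
    show k.choose 1 + k.choose 2 = k.choose 2 + k
    rw [Nat.choose_one_right]
    omega
  rw [dc, dc, qfact_succ, h2, pow_add]
  have hg : (q - 1) * qint q (k + 1) = q ^ (k + 1) - 1 := by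
    rw [qint, ← geom_sum_mul]
    ring
  linear_combination (x ^ (k + 1) * q ^ (k.choose 2) * q ^ k * (q - 1) ^ k * qfact q k) * hg

/-- The quadratic form side. -/
def Fm (m n : ℕ) : R := ∑ k ∈ Finset.range (n + 1), cc q x m k * cc q x n k * dc q x k

def g (m n k : ℕ) : R :=
  (cc q x m k * cc q x n (k - 1) - cc q x m (k - 1) * cc q x n k) * dc q x k

lemma tele (m n k : ℕ) :
    (cc q x (m + 1) k * cc q x n k - cc q x m k * cc q x (n + 1) k) * dc q x k
      = g q x m n (k + 1) - g q x m n k := by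
  cases k with
  | zero =>
    simp only [g, Nat.zero_sub, Nat.sub_self, Nat.add_sub_cancel, Nat.zero_add]
    rw [cc_rec_zero q x m, cc_rec_zero q x n, dc_one, dc_zero]
    ring
  | succ k =>
    simp only [g, Nat.add_sub_cancel]
    rw [cc_rec_succ q x m k, cc_rec_succ q x n k, dc_succ q x (k + 1)]
    ring

lemma step (m n : ℕ) : Fm q x (m + 1) n = Fm q x m (n + 1) := by
  have hsum : ∑ k ∈ Finset.range (n + 1),
      (cc q x (m + 1) k * cc q x n k - cc q x m k * cc q x (n + 1) k) * dc q x k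
        = g q x m n (n + 1) - g q x m n 0 := by
    rw [Finset.sum_congr rfl fun k _ => tele q x m n k, Finset.sum_range_sub (g q x m n)]
  have hg0 : g q x m n 0 = 0 := by
    simp [g]
  have hgn : g q x m n (n + 1) = cc q x m (n + 1) * dc q x (n + 1) := by
    rw [g, Nat.add_sub_cancel, cc_self, cc_eq_zero q x (Nat.lt_succ_self n)]
    ring
  rw [hg0, hgn, sub_zero] at hsum
  have expand : Fm q x (m + 1) n
      = (∑ k ∈ Finset.range (n + 1), cc q x m k * cc q x (n + 1) k * dc q x k)
        + ∑ k ∈ Finset.range (n + 1),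
            (cc q x (m + 1) k * cc q x n k - cc q x m k * cc q x (n + 1) k) * dc q x k := by
    rw [Fm, ← Finset.sum_add_distrib]
    refine Finset.sum_congr rfl fun k _ => ?_
    ring
  have hF : Fm q x m (n + 1)
      = (∑ k ∈ Finset.range (n + 1), cc q x m k * cc q x (n + 1) k * dc q x k)
        + cc q x m (n + 1) * dc q x (n + 1) := by
    rw [Fm, Finset.sum_range_succ, cc_self]
    ring
  rw [expand, hsum, hF]

lemma master (m n : ℕ) : rs q x (m + n) = Fm q x m n := by
  induction n generalizing m with
  | zero =>
    have : Fm q x m 0 = cc q x m 0 * cc q x 0 0 * dc q x 0 := by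
      rw [Fm, Finset.sum_range_one]
    rw [this, cc_self, dc_zero, cc, qbinom_zero_right, Nat.sub_zero]
    ring
  | succ n ih =>
    rw [(by omega : m + (n + 1) = (m + 1) + n), ih (m + 1), step]

lemma sum_range_id_choose (n : ℕ) : ∑ k ∈ Finset.range n, k = n.choose 2 := by
  induction n with
  | zero => rfl
  | succ n ih =>
    rw [Finset.sum_range_succ, ih]
    have h : (n + 1).choose 2 = n.choose 2 + n := by
      rw [Nat.choose_succ_succ]
      show n.choose 1 + n.choose 2 = n.choose 2 + n
      rw [Nat.choose_one_right]
      omega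
    omega

lemma sum_range_choose_two (n : ℕ) : ∑ k ∈ Finset.range n, k.choose 2 = n.choose 3 := by
  induction n with
  | zero => rfl
  | succ n ih =>
    rw [Finset.sum_range_succ, ih]
    have h : (n + 1).choose 3 = n.choose 3 + n.choose 2 := by
      rw [Nat.choose_succ_succ]
      show n.choose 2 + n.choose 3 = n.choose 3 + n.choose 2
      omega
    omega

end HankelRSAux

open HankelRSAux in
/-- Hankel determinant of the Rogers–Szegő polynomials. -/
theorem hankel_det_rogersSzego {R : Type*} [CommRing R] (q x : R) (n : ℕ) :
    (Matrix.of fun i j : Fin n =>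
        ∑ k ∈ Finset.range ((i : ℕ) + (j : ℕ) + 1), qbinom q ((i : ℕ) + (j : ℕ)) k * x ^ k).det =
      x ^ n.choose 2 * q ^ n.choose 3 * (q - 1) ^ n.choose 2 * ∏ j ∈ Finset.range n, qfact q j := by
  classical
  set C : Matrix (Fin n) (Fin n) R := Matrix.of fun i k : Fin n => cc q x i k with hC
  set Dg : Matrix (Fin n) (Fin n) R :=
    Matrix.diagonal fun k : Fin n => dc q x k with hDg
  have hfac : (Matrix.of fun i j : Fin n =>
      ∑ k ∈ Finset.range ((i : ℕ) + (j : ℕ) + 1), qbinom q ((i : ℕ) + (j : ℕ)) k * x ^ k)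
        = C * Dg * Cᵀ := by
    ext i j
    have h1 : (C * Dg * Cᵀ) i j = ∑ k : Fin n, cc q x i k * dc q x k * cc q x j k := by
      rw [Matrix.mul_apply]
      refine Finset.sum_congr rfl fun k _ => ?_
      rw [Matrix.mul_diagonal]
      rfl
    rw [Matrix.of_apply, h1]
    have h2 : ∑ k : Fin n, cc q x i k * dc q x k * cc q x j k
        = ∑ k ∈ Finset.range n, cc q x i k * dc q x k * cc q x j k :=
      Fin.sum_univ_eq_sum_range (fun k => cc q x i k * dc q x k * cc q x j k) n
    have h3 : ∑ k ∈ Finset.range ((j : ℕ) + 1), cc q x i k * cc q x j k * dc q x k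
        = ∑ k ∈ Finset.range n, cc q x i k * dc q x k * cc q x j k := by
      rw [Finset.sum_subset (Finset.range_subset_range.2 (by omega : (j : ℕ) + 1 ≤ n))]
      · exact Finset.sum_congr rfl fun k _ => by ring
      · intro k hk hk'
        have : (j : ℕ) < k := by
          simp only [Finset.mem_range] at hk hk'
          omega
        rw [cc_eq_zero q x this]
        ring
    rw [h2, ← h3]
    exact master q x (i : ℕ) (j : ℕ)
  rw [hfac, Matrix.det_mul, Matrix.det_mul, Matrix.det_transpose]
  have hCdet : C.det = 1 := by
    have htri : C.BlockTriangular OrderDual.toDual := by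
      intro i j hij
      have : (i : ℕ) < (j : ℕ) := hij
      exact cc_eq_zero q x this
    rw [Matrix.det_of_lowerTriangular C htri]
    have : ∀ i : Fin n, C i i = 1 := fun i => cc_self q x i
    simp [this]
  have hDdet : Dg.det = ∏ k ∈ Finset.range n, dc q x k := by
    rw [hDg, Matrix.det_diagonal]
    exact Fin.prod_univ_eq_prod_range _ n
  rw [hCdet, hDdet]
  have hprod : ∏ k ∈ Finset.range n, dc q x k
      = x ^ n.choose 2 * q ^ n.choose 3 * (q - 1) ^ n.choose 2
          * ∏ j ∈ Finset.range n, qfact q j := by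
    simp only [dc]
    rw [Finset.prod_mul_distrib, Finset.prod_mul_distrib, Finset.prod_mul_distrib,
      Finset.prod_pow_eq_pow_sum, Finset.prod_pow_eq_pow_sum, Finset.prod_pow_eq_pow_sum,
      sum_range_id_choose, sum_range_choose_two]
  rw [hprod]
  ring
end
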